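/- Fix an integer b ≥ 1, reals γ > 0 and θ ∈ (0,1). For each n, let m = m(n) = n/(γ²·(log n)^{1−θ}) (assume m is an integer) and place n balls independently and uniformly at random into m equally likely bins. Let F be the number of bins containing exactly b balls. Then for all sufficiently large n, P(F ≥ n^{1/2}) ≥ 1 − 2·e^{−n^{1/4}}. -/

import Mathlib

open MeasureTheory ProbabilityTheory ENNReal

/-- The number of bins (elements of `Fin m`) containing exactly `b` of the `n` balls under
the placement `y : Fin n → Fin m`. -/
def binCount {n m : ℕ} (b : ℕ) (y : Fin n → Fin m) : ℕ :=
  (Finset.univ.filter fun j : Fin m =>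
    (Finset.univ.filter fun i : Fin n => y i = j).card = b).card

private lemma exp_le_one_add_sq' {u : ℝ} (hu : |u| ≤ 1) : Real.exp u ≤ 1 + u + u ^ 2 := by
  have h := Real.exp_bound hu (n := 2) (by norm_num)
  have h2 : ∑ i ∈ Finset.range 2, u ^ i / i.factorial = 1 + u := by
    simp [Finset.sum_range_succ]
  rw [h2] at h
  norm_num [Nat.factorial] at h
  have := abs_le.1 h
  nlinarith [sq_nonneg u, sq_abs u]

private lemma sum_exp_le' {m : ℕ} (Z : Fin m → ℝ) (c t : ℝ) (ht : 0 ≤ t) (hc : 0 ≤ c)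
    (htc : t * c ≤ 1) (hZ : ∀ x, |Z x| ≤ c) (hsum : ∑ x, Z x = 0) :
    ∑ x, Real.exp (-(t * Z x)) ≤ m * Real.exp (t ^ 2 * c ^ 2) := by
  have key : ∀ x, Real.exp (-(t * Z x)) ≤ 1 + (-(t * Z x)) + t ^ 2 * c ^ 2 := by
    intro x
    have h1 : |(-(t * Z x))| ≤ 1 := by
      rw [abs_neg, abs_mul, abs_of_nonneg ht]
      exact le_trans (mul_le_mul_of_nonneg_left (hZ x) ht) htc
    refine le_trans (exp_le_one_add_sq' h1) ?_
    have : (-(t * Z x)) ^ 2 ≤ t ^ 2 * c ^ 2 := by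
      have := hZ x
      have h2 : (Z x) ^ 2 ≤ c ^ 2 := by nlinarith [abs_le.1 (hZ x)]
      have := sq_nonneg t
      calc (-(t * Z x)) ^ 2 = t ^ 2 * (Z x) ^ 2 := by ring
      _ ≤ t ^ 2 * c ^ 2 := by nlinarith
    linarith
  calc ∑ x, Real.exp (-(t * Z x)) ≤ ∑ x, (1 + (-(t * Z x)) + t ^ 2 * c ^ 2) :=
        Finset.sum_le_sum fun x _ => key x
    _ = m * (1 + t ^ 2 * c ^ 2) := by
        have h0 : ∑ x : Fin m, -(t * Z x) = 0 := by
          simp only [neg_mul_eq_neg_mul, ← Finset.mul_sum, hsum, mul_zero]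
        rw [Finset.sum_add_distrib, Finset.sum_add_distrib, h0]
        simp [Finset.card_univ, mul_add]
    _ ≤ m * Real.exp (t ^ 2 * c ^ 2) := by
        have := Real.add_one_le_exp (t ^ 2 * c ^ 2)
        have : (1 : ℝ) + t ^ 2 * c ^ 2 ≤ Real.exp (t ^ 2 * c ^ 2) := by linarith
        exact mul_le_mul_of_nonneg_left this (by positivity)

private lemma abs_avg_le' {m : ℕ} (hm : 0 < m) (d : Fin m → ℝ) (c : ℝ)
    (hd : ∀ x, |d x| ≤ c) : |(∑ x, d x) / m| ≤ c := by
  have hc : 0 ≤ c := le_trans (abs_nonneg _) (hd ⟨0, hm⟩)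
  rw [abs_div, abs_of_nonneg (by positivity : (0:ℝ) ≤ (m:ℝ))]
  rw [div_le_iff₀ (by positivity)]
  calc |∑ x, d x| ≤ ∑ x, |d x| := Finset.abs_sum_le_sum_abs _ _
    _ ≤ ∑ _x : Fin m, c := Finset.sum_le_sum fun x _ => hd x
    _ = c * m := by simp [Finset.card_univ, mul_comm]

private lemma mgf_ind' {m : ℕ} (hm : 0 < m) (c t : ℝ) (hc : 0 ≤ c) (ht : 0 ≤ t)
    (htc : t * c ≤ 1) :
    ∀ (n : ℕ) (f : (Fin n → Fin m) → ℝ),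
    (∀ y i x, |f (Function.update y i x) - f y| ≤ c) →
    ∑ y, Real.exp (-(t * f y)) ≤
      (m : ℝ) ^ n * Real.exp (t ^ 2 * c ^ 2 * n) *
        Real.exp (-(t * ((∑ y, f y) / (m : ℝ) ^ n))) := by
  intro n
  induction n with
  | zero =>
    intro f _
    simp [Fintype.sum_unique]
  | succ n ih =>
    intro f hf
    have hmR : (0:ℝ) < (m:ℝ) := by exact_mod_cast hm
    set g : (Fin n → Fin m) → ℝ := fun y' => (∑ x, f (Fin.cons x y')) / m with hg
    have hsum_eq : ∀ (F : (Fin (n+1) → Fin m) → ℝ),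
        ∑ y, F y = ∑ y' : Fin n → Fin m, ∑ x : Fin m, F (Fin.cons x y') := by
      intro F
      rw [← (Fin.consEquiv (fun _ => Fin m)).sum_comp F, Fintype.sum_prod_type,
        Finset.sum_comm]
      rfl
    have hZbound : ∀ (y' : Fin n → Fin m) (x : Fin m), |f (Fin.cons x y') - g y'| ≤ c := by
      intro y' x
      have : f (Fin.cons x y') - g y' = (∑ x', (f (Fin.cons x y') - f (Fin.cons x' y'))) / m := by
        rw [Finset.sum_sub_distrib, sub_div, Finset.sum_const, hg]
        simp only [Finset.card_univ, Fintype.card_fin, nsmul_eq_mul]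
        field_simp
      rw [this]
      refine abs_avg_le' hm _ c fun x' => ?_
      have h1 := Fin.update_cons_zero (α := fun _ : Fin (n+1) => Fin m) x y' x'
      rw [← h1, abs_sub_comm]
      exact hf _ _ _
    have hZsum : ∀ y' : Fin n → Fin m, ∑ x, (f (Fin.cons x y') - g y') = 0 := by
      intro y'
      rw [Finset.sum_sub_distrib, Finset.sum_const, hg]
      simp only [Finset.card_univ, Fintype.card_fin, nsmul_eq_mul]
      field_simp
      ring
    have hgbd : ∀ y' i x, |g (Function.update y' i x) - g y'| ≤ c := by
      intro y' i x
      have : g (Function.update y' i x) - g y'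
          = (∑ x0, (f (Fin.cons x0 (Function.update y' i x)) - f (Fin.cons x0 y'))) / m := by
        rw [Finset.sum_sub_distrib, sub_div, hg]
      rw [this]
      refine abs_avg_le' hm _ c fun x0 => ?_
      rw [Fin.cons_update]
      exact hf _ _ _
    calc ∑ y, Real.exp (-(t * f y))
        = ∑ y' : Fin n → Fin m, ∑ x : Fin m, Real.exp (-(t * f (Fin.cons x y'))) := by
          rw [hsum_eq (fun y => Real.exp (-(t * f y)))]
      _ = ∑ y' : Fin n → Fin m, Real.exp (-(t * g y')) *
            ∑ x : Fin m, Real.exp (-(t * (f (Fin.cons x y') - g y'))) := by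
          refine Finset.sum_congr rfl fun y' _ => ?_
          rw [Finset.mul_sum]
          refine Finset.sum_congr rfl fun x _ => ?_
          rw [← Real.exp_add]
          ring_nf
      _ ≤ ∑ y' : Fin n → Fin m, Real.exp (-(t * g y')) * (m * Real.exp (t ^ 2 * c ^ 2)) := by
          refine Finset.sum_le_sum fun y' _ => ?_
          exact mul_le_mul_of_nonneg_left
            (sum_exp_le' _ c t ht hc htc (hZbound y') (hZsum y')) (Real.exp_nonneg _)
      _ = (m * Real.exp (t ^ 2 * c ^ 2)) * ∑ y' : Fin n → Fin m, Real.exp (-(t * g y')) := by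
          rw [← Finset.sum_mul]; ring
      _ ≤ (m * Real.exp (t ^ 2 * c ^ 2)) *
            ((m : ℝ) ^ n * Real.exp (t ^ 2 * c ^ 2 * n) *
              Real.exp (-(t * ((∑ y', g y') / (m : ℝ) ^ n)))) := by
          refine mul_le_mul_of_nonneg_left (ih g hgbd) (by positivity)
      _ = (m : ℝ) ^ (n+1) * Real.exp (t ^ 2 * c ^ 2 * ((n+1 : ℕ) : ℝ)) *
            Real.exp (-(t * ((∑ y, f y) / (m : ℝ) ^ (n+1)))) := by
          have hEg : (∑ y', g y') / (m : ℝ) ^ n = (∑ y, f y) / (m : ℝ) ^ (n+1) := by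
            rw [hsum_eq f, hg, ← Finset.sum_div, div_div, pow_succ]
            ring_nf
          have hE : Real.exp (t ^ 2 * c ^ 2) * Real.exp (t ^ 2 * c ^ 2 * n)
              = Real.exp (t ^ 2 * c ^ 2 * ((n+1 : ℕ) : ℝ)) := by
            rw [← Real.exp_add]; push_cast; ring_nf
          rw [hEg, ← hE, pow_succ]
          ring

private lemma chernoff_count' {m n : ℕ} (hm : 0 < m) (f : (Fin n → Fin m) → ℝ) (c t a : ℝ)
    (hc : 0 ≤ c) (ht : 0 ≤ t) (htc : t * c ≤ 1)
    (hf : ∀ y i x, |f (Function.update y i x) - f y| ≤ c) :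
    ((Finset.univ.filter fun y => f y ≤ (∑ z, f z) / (m : ℝ) ^ n - a).card : ℝ) ≤
      (m : ℝ) ^ n * Real.exp (t ^ 2 * c ^ 2 * n - t * a) := by
  set E : ℝ := (∑ z, f z) / (m : ℝ) ^ n with hE
  set G := Finset.univ.filter fun y => f y ≤ E - a with hG
  have h1 : (G.card : ℝ) * Real.exp (-(t * (E - a))) ≤ ∑ y, Real.exp (-(t * f y)) := by
    have h2 : ∀ y ∈ G, Real.exp (-(t * (E - a))) ≤ Real.exp (-(t * f y)) := by
      intro y hy
      rw [hG, Finset.mem_filter] at hy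
      exact Real.exp_le_exp.2 (by nlinarith [hy.2])
    calc (G.card : ℝ) * Real.exp (-(t * (E - a))) = ∑ _y ∈ G, Real.exp (-(t * (E - a))) := by
          rw [Finset.sum_const, nsmul_eq_mul]
      _ ≤ ∑ y ∈ G, Real.exp (-(t * f y)) := Finset.sum_le_sum h2
      _ ≤ ∑ y, Real.exp (-(t * f y)) :=
          Finset.sum_le_sum_of_subset_of_nonneg (Finset.subset_univ _)
            (fun _ _ _ => Real.exp_nonneg _)
  have h3 := le_trans h1 (mgf_ind' hm c t hc ht htc n f hf)
  have hexp : (0:ℝ) < Real.exp (-(t * (E - a))) := Real.exp_pos _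
  rw [← le_div_iff₀ hexp] at h3
  refine le_trans h3 ?_
  rw [div_eq_mul_inv, ← Real.exp_neg, mul_assoc, mul_assoc, ← Real.exp_add, ← Real.exp_add]
  refine mul_le_mul_of_nonneg_left ?_ (by positivity)
  rw [Real.exp_le_exp]
  ring_nf
  linarith [show t * E = (t * ∑ y, f y) * ((m : ℝ))⁻¹ ^ n by rw [hE]; ring]

private lemma binCount_bdd' {n m : ℕ} (b : ℕ) (y : Fin n → Fin m) (i : Fin n) (x : Fin m) :
    |((binCount b (Function.update y i x) : ℝ)) - (binCount b y : ℝ)| ≤ 2 := by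
  classical
  set A := Finset.univ.filter fun j : Fin m =>
    (Finset.univ.filter fun i' : Fin n => Function.update y i x i' = j).card = b with hA
  set B := Finset.univ.filter fun j : Fin m =>
    (Finset.univ.filter fun i' : Fin n => y i' = j).card = b with hB
  have key : ∀ j : Fin m, j ≠ y i → j ≠ x → (j ∈ A ↔ j ∈ B) := by
    intro j hj1 hj2
    have : (Finset.univ.filter fun i' : Fin n => Function.update y i x i' = j)
        = Finset.univ.filter fun i' : Fin n => y i' = j := by
      refine Finset.filter_congr fun i' _ => ?_
      by_cases h : i' = i
      · subst h
        rw [Function.update_self]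
        exact ⟨fun h => absurd h.symm hj2, fun h => absurd h.symm hj1⟩
      · simp [Function.update_of_ne h]
    simp [hA, hB, this]
  have hAB : A \ B ⊆ {y i, x} := by
    intro j hj
    rw [Finset.mem_sdiff] at hj
    by_contra hcon
    simp only [Finset.mem_insert, Finset.mem_singleton] at hcon
    push_neg at hcon
    exact hj.2 ((key j hcon.1 hcon.2).1 hj.1)
  have hBA : B \ A ⊆ {y i, x} := by
    intro j hj
    rw [Finset.mem_sdiff] at hj
    by_contra hcon
    simp only [Finset.mem_insert, Finset.mem_singleton] at hcon
    push_neg at hcon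
    exact hj.2 ((key j hcon.1 hcon.2).2 hj.1)
  have h2 : ({y i, x} : Finset (Fin m)).card ≤ 2 :=
    le_trans (Finset.card_insert_le _ _) (by simp)
  have c1 : A.card ≤ B.card + 2 := by
    calc A.card ≤ (B ∪ (A \ B)).card := Finset.card_le_card (by
          intro j hj; rw [Finset.mem_union, Finset.mem_sdiff]; tauto)
      _ ≤ B.card + (A \ B).card := Finset.card_union_le _ _
      _ ≤ B.card + 2 := by
          have := Finset.card_le_card hAB
          omega
  have c2 : B.card ≤ A.card + 2 := by
    calc B.card ≤ (A ∪ (B \ A)).card := Finset.card_le_card (by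
          intro j hj; rw [Finset.mem_union, Finset.mem_sdiff]; tauto)
      _ ≤ A.card + (B \ A).card := Finset.card_union_le _ _
      _ ≤ A.card + 2 := by
          have := Finset.card_le_card hBA
          omega
  have e1 : binCount b (Function.update y i x) = A.card := rfl
  have e2 : binCount b y = B.card := rfl
  rw [e1, e2]
  have r1 : (A.card : ℝ) ≤ (B.card : ℝ) + 2 := by exact_mod_cast c1
  have r2 : (B.card : ℝ) ≤ (A.card : ℝ) + 2 := by exact_mod_cast c2
  rw [abs_le]
  constructor <;> linarith

private lemma count_fiber' {n m b : ℕ} (j : Fin m) :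
    (Finset.univ.filter fun y : Fin n → Fin m =>
      (Finset.univ.filter fun i : Fin n => y i = j).card = b).card
      = n.choose b * (m - 1) ^ (n - b) := by
  classical
  by_cases hbn : b ≤ n
  · set T : Finset (Fin n) → (Fin n → Finset (Fin m)) :=
      fun s i => if i ∈ s then {j} else Finset.univ.erase j with hT
    have hsplit : (Finset.univ.filter fun y : Fin n → Fin m =>
        (Finset.univ.filter fun i : Fin n => y i = j).card = b)
        = (Finset.univ.powersetCard b).biUnion fun s => Fintype.piFinset (T s) := by
      ext y
      simp only [Finset.mem_filter, Finset.mem_univ, true_and, Finset.mem_biUnion,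
        Finset.mem_powersetCard, Fintype.mem_piFinset, hT]
      constructor
      · intro hy
        refine ⟨Finset.univ.filter fun i => y i = j, ⟨Finset.subset_univ _, hy⟩, fun i => ?_⟩
        by_cases h : y i = j <;> simp [h]
      · rintro ⟨s, ⟨-, hcard⟩, hmem⟩
        have : (Finset.univ.filter fun i : Fin n => y i = j) = s := by
          ext i
          simp only [Finset.mem_filter, Finset.mem_univ, true_and]
          constructor
          · intro h
            by_contra hc
            have := hmem i
            rw [if_neg hc] at this
            exact (Finset.mem_erase.1 this).1 h
          · intro h
            have := hmem i
            rw [if_pos h] at this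
            simpa using this
        rw [this, hcard]
    rw [hsplit]
    rw [Finset.card_biUnion]
    · have hcard : ∀ s ∈ Finset.univ.powersetCard b,
          (Fintype.piFinset (T s)).card = (m - 1) ^ (n - b) := by
        intro s hs
        rw [Finset.mem_powersetCard] at hs
        rw [Fintype.card_piFinset]
        have : ∀ i, (T s i).card = if i ∈ s then 1 else m - 1 := by
          intro i
          rw [hT]
          by_cases h : i ∈ s <;> simp [h, Finset.card_erase_of_mem, Finset.card_univ]
        rw [Finset.prod_congr rfl fun i _ => this i]
        rw [Finset.prod_ite]
        simp only [Finset.prod_const_one, Finset.prod_const, one_mul]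
        have hcompl : Finset.univ.filter (fun i => ¬ i ∈ s) = sᶜ := by
          ext i; simp
        rw [hcompl, Finset.card_compl, Fintype.card_fin, hs.2]
      rw [Finset.sum_congr rfl hcard, Finset.sum_const, Finset.card_powersetCard,
        Finset.card_univ, Fintype.card_fin, smul_eq_mul]
    · intro s hs s' hs' hne
      rw [Function.onFun, Finset.disjoint_left]
      intro y hy hy'
      rw [Fintype.mem_piFinset] at hy hy'
      apply hne
      ext i
      have h1 := hy i
      have h2 := hy' i
      rw [hT] at h1 h2
      simp only at h1 h2
      constructor
      · intro hi
        rw [if_pos hi] at h1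
        by_contra hi'
        rw [if_neg hi'] at h2
        simp only [Finset.mem_singleton] at h1
        exact (Finset.mem_erase.1 h2).1 h1
      · intro hi
        rw [if_pos hi] at h2
        by_contra hi'
        rw [if_neg hi'] at h1
        simp only [Finset.mem_singleton] at h2
        exact (Finset.mem_erase.1 h1).1 h2
  · have h0 : n.choose b = 0 := Nat.choose_eq_zero_of_lt (lt_of_not_ge hbn)
    rw [h0, zero_mul, Finset.card_eq_zero]
    rw [Finset.filter_eq_empty_iff]
    intro y _
    intro hy
    refine hbn ?_
    rw [← hy]
    exact le_trans (Finset.card_filter_le _ _) (by simp)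

private lemma sum_binCount' {n m b : ℕ} :
    ∑ y : Fin n → Fin m, binCount b y = m * (n.choose b * (m - 1) ^ (n - b)) := by
  classical
  have h1 : ∀ y : Fin n → Fin m, binCount b y
      = ∑ j : Fin m, if (Finset.univ.filter fun i : Fin n => y i = j).card = b then 1 else 0 := by
    intro y
    rw [binCount, Finset.card_filter]
  rw [Finset.sum_congr rfl fun y _ => h1 y, Finset.sum_comm]
  rw [Finset.sum_congr rfl fun j (_ : j ∈ Finset.univ) => (Finset.card_filter _ _).symm]
  rw [Finset.sum_congr rfl fun j (_ : j ∈ Finset.univ) => count_fiber' j]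
  rw [Finset.sum_const, Finset.card_univ, Fintype.card_fin, smul_eq_mul]

set_option maxHeartbeats 4000000 in
/-- **Balls into bins, concentration.** Throwing `n` balls i.i.d. uniformly into
`m = n/(γ²(log n)^(1−θ))` bins, the number `F` of bins containing exactly `b` balls
satisfies `P(F ≥ √n) ≥ 1 − 2·e^(−n^(1/4))` for all sufficiently large `n`. -/
theorem balls_in_bins_concentration (b : ℕ) (hb : 1 ≤ b) (γ θ : ℝ)
    (hγ : 0 < γ) (hθ0 : 0 < θ) (hθ1 : θ < 1) :
    ∃ n₀ : ℕ, ∀ n, n₀ ≤ n → ∀ m : ℕ,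
      (m : ℝ) = n / (γ ^ 2 * Real.log n ^ (1 - θ)) →
      ∀ (Ω : Type) [MeasurableSpace Ω] (μ : Measure Ω) [IsProbabilityMeasure μ]
        (Y : Fin n → Ω → Fin m),
        (∀ i, Measurable (Y i)) →
        iIndepFun Y μ →
        (∀ (i : Fin n) (j : Fin m), μ {ω | Y i ω = j} = (m : ℝ≥0∞)⁻¹) →
        1 - ENNReal.ofReal (2 * Real.exp (-(n : ℝ) ^ ((1 : ℝ) / 4))) ≤
          μ {ω | (n : ℝ) ^ ((1 : ℝ) / 2) ≤ (binCount b (fun i => Y i ω) : ℝ)} := by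
  classical
  have hlog : Filter.Tendsto (fun n : ℕ => Real.log n) Filter.atTop Filter.atTop :=
    Real.tendsto_log_atTop.comp tendsto_natCast_atTop_atTop
  have hev : ∀ᶠ n : ℕ in Filter.atTop,
      (4 ≤ n ∧ 2 * b ≤ n) ∧ 1 ≤ Real.log n ∧
        (2 * (b : ℝ) ≤ γ ^ 2 * Real.log n ^ (1 - θ)) ∧
        (32 * γ ^ 2 ≤ Real.log n ^ θ) ∧
        (4 ≤ (n : ℝ) ^ ((1 : ℝ) / 8)) := by
    have e1 := (Filter.eventually_ge_atTop (4:ℕ)).and (Filter.eventually_ge_atTop (2*b))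
    have e2 := hlog.eventually_ge_atTop 1
    have t1 : Filter.Tendsto (fun n : ℕ => γ ^ 2 * Real.log n ^ (1 - θ))
        Filter.atTop Filter.atTop :=
      ((tendsto_rpow_atTop (by linarith)).comp hlog).const_mul_atTop (by positivity)
    have e3 := t1.eventually_ge_atTop (2 * (b : ℝ))
    have e4 := ((tendsto_rpow_atTop hθ0).comp hlog).eventually_ge_atTop (32 * γ ^ 2)
    have e5 := ((tendsto_rpow_atTop (by norm_num : (0:ℝ) < 1/8)).comp
        tendsto_natCast_atTop_atTop).eventually_ge_atTop (4:ℝ)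
    filter_upwards [e1, e2, e3, e4, e5] with k h1 h2 h3 h4 h5
    exact ⟨h1, h2, h3, h4, h5⟩
  obtain ⟨n₀, hn₀⟩ := Filter.eventually_atTop.1 hev
  refine ⟨n₀, fun n hn m hmeq Ω _ μ _ Y hY hind hunif => ?_⟩
  obtain ⟨⟨hn4, hn2b⟩, hL1, hD2b, hLθ, hn8⟩ := hn₀ n hn
  -- basic positivity facts
  have hnpos : (0:ℝ) < n := by
    have : 0 < n := by omega
    exact_mod_cast this
  set L : ℝ := Real.log n with hLdef
  set D : ℝ := γ ^ 2 * L ^ (1 - θ) with hDdef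
  have hLpos : (0:ℝ) < L := lt_of_lt_of_le one_pos hL1
  have hDpos : (0:ℝ) < D := by
    have : (0:ℝ) < L ^ (1 - θ) := Real.rpow_pos_of_pos hLpos _
    positivity
  have hbR : (1:ℝ) ≤ b := by exact_mod_cast hb
  have hbpos : (0:ℝ) < b := lt_of_lt_of_le one_pos hbR
  have hD2 : (2:ℝ) ≤ D := le_trans (by linarith) hD2b
  have hmR : (0:ℝ) < m := by rw [hmeq]; positivity
  have hmpos : 0 < m := by exact_mod_cast hmR
  have hbn : b ≤ n := by omega
  -- 2*D ≤ L/16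
  have hD16 : 2 * D ≤ L / 16 := by
    have hsub : L ^ (1 - θ) = L / L ^ θ := by
      rw [Real.rpow_sub hLpos, Real.rpow_one]
    have hLθpos : (0:ℝ) < L ^ θ := Real.rpow_pos_of_pos hLpos _
    have hγpos : (0:ℝ) < 32 * γ ^ 2 := by positivity
    have h1 : 2 * D = 2 * γ ^ 2 * L / L ^ θ := by
      rw [hDdef, hsub]; ring
    rw [h1]
    have h2 : 2 * γ ^ 2 * L / L ^ θ ≤ 2 * γ ^ 2 * L / (32 * γ ^ 2) :=
      div_le_div_of_nonneg_left (by positivity) hγpos hLθ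
    refine le_trans h2 (le_of_eq ?_)
    field_simp
    ring
  -- log m ≥ 15/16 L
  have hnm : (n:ℝ) / m = D := by
    rw [hmeq]
    field_simp
  have hlogm : Real.log m = L - Real.log D := by
    rw [hmeq, Real.log_div (by positivity) (by positivity)]
  have hlogD : Real.log D ≤ L / 16 := by
    have := Real.log_le_sub_one_of_pos hDpos
    linarith
  have hm15 : 15 / 16 * L ≤ Real.log m := by rw [hlogm]; linarith
  have hm2 : (2:ℝ) ≤ m := by
    have h1 : Real.log 2 ≤ Real.log m := by
      have : Real.log 2 < 1 := by
        have := Real.log_two_lt_d9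
        linarith
      nlinarith
    calc (2:ℝ) = Real.exp (Real.log 2) := (Real.exp_log two_pos).symm
      _ ≤ Real.exp (Real.log m) := Real.exp_le_exp.2 h1
      _ = m := Real.exp_log hmR
  -- powers of n
  have hn18 : (4:ℝ) ≤ (n:ℝ) ^ ((1:ℝ)/8) := hn8
  have hquarter : (n:ℝ) ^ ((1:ℝ)/4) = (n:ℝ) ^ ((1:ℝ)/8) * (n:ℝ) ^ ((1:ℝ)/8) := by
    rw [← Real.rpow_add hnpos]; norm_num
  have hn14 : (16:ℝ) ≤ (n:ℝ) ^ ((1:ℝ)/4) := by rw [hquarter]; nlinarith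
  have h38 : (n:ℝ) ^ ((3:ℝ)/8) = (n:ℝ) ^ ((1:ℝ)/4) * (n:ℝ) ^ ((1:ℝ)/8) := by
    rw [← Real.rpow_add hnpos]; norm_num
  have hn38 : 4 * (n:ℝ) ^ ((1:ℝ)/4) ≤ (n:ℝ) ^ ((3:ℝ)/8) := by
    rw [h38]
    nlinarith [Real.rpow_pos_of_pos hnpos ((1:ℝ)/4)]
  have h12 : (n:ℝ) ^ ((1:ℝ)/2) = (n:ℝ) ^ ((1:ℝ)/8) * (n:ℝ) ^ ((3:ℝ)/8) := by
    rw [← Real.rpow_add hnpos]; norm_num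
  have h78 : (n:ℝ) ^ ((7:ℝ)/8) = (n:ℝ) ^ ((1:ℝ)/2) * (n:ℝ) ^ ((3:ℝ)/8) := by
    rw [← Real.rpow_add hnpos]; norm_num
  have hn38pos : (0:ℝ) < (n:ℝ) ^ ((3:ℝ)/8) := Real.rpow_pos_of_pos hnpos _
  have hn12pos : (0:ℝ) < (n:ℝ) ^ ((1:ℝ)/2) := Real.rpow_pos_of_pos hnpos _
  have hn38ge2 : (2:ℝ) ≤ (n:ℝ) ^ ((3:ℝ)/8) := by linarith only [hn38, hn14, Real.rpow_pos_of_pos hnpos ((1:ℝ)/4)]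
  have hsqrt78 : (n:ℝ) ^ ((1:ℝ)/2) ≤ (n:ℝ) ^ ((7:ℝ)/8) / 2 := by
    rw [h78]
    rw [le_div_iff₀ (by norm_num : (0:ℝ) < 2)]
    nlinarith only [hn38ge2, hn12pos]
  -- Expectation lower bound
  obtain ⟨f, hfdef⟩ : ∃ f : (Fin n → Fin m) → ℝ, f = fun y => (binCount b y : ℝ) := ⟨_, rfl⟩
  obtain ⟨E, hEdef⟩ : ∃ E : ℝ, E = (∑ z, f z) / (m:ℝ) ^ n := ⟨_, rfl⟩
  have hsumf : ∑ z, f z = (m:ℝ) * ((n.choose b : ℝ) * ((m:ℝ) - 1) ^ (n - b)) := by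
    rw [hfdef]
    have hc1 : ∑ z : Fin n → Fin m, ((binCount b z : ℕ) : ℝ)
        = ((∑ z : Fin n → Fin m, binCount b z : ℕ) : ℝ) := by
      rw [Nat.cast_sum]
    rw [hc1, sum_binCount' (n := n) (m := m) (b := b)]
    push_cast [Nat.cast_sub (show 1 ≤ m from hmpos)]
    ring
  have hfactpos : (0:ℝ) < (b.factorial : ℝ) := by exact_mod_cast b.factorial_pos
  have hDm : D * m = n := by
    rw [hmeq, mul_comm, div_mul_cancel₀ _ (ne_of_gt hDpos)]
  have hCb : (m:ℝ) ^ b ≤ (n.choose b : ℝ) := by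
    have hfact : (b.factorial : ℝ) ≤ (b:ℝ) ^ b := by exact_mod_cast Nat.factorial_le_pow b
    have hmb : (m:ℝ) * (b:ℝ) ≤ (n:ℝ) / 2 := by
      have h1 : (2 * (b:ℝ)) * m ≤ D * m :=
        mul_le_mul_of_nonneg_right hD2b (le_of_lt hmR)
      rw [hDm] at h1
      linarith only [h1]
    have hnb : (n:ℝ) / 2 ≤ ((n + 1 - b : ℕ) : ℝ) := by
      have hcast : ((n + 1 - b : ℕ) : ℝ) = (n:ℝ) + 1 - b := by
        have : b ≤ n + 1 := by omega
        push_cast [Nat.cast_sub this]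
        ring
      rw [hcast]
      have : 2 * (b:ℝ) ≤ (n:ℝ) := by exact_mod_cast hn2b
      linarith only [this]
    have hb1 : (m:ℝ) ^ b * (b.factorial : ℝ) ≤ ((m:ℝ) * b) ^ b := by
      rw [mul_pow]
      exact mul_le_mul_of_nonneg_left hfact (by positivity)
    have hb2 : ((m:ℝ) * b) ^ b ≤ ((n:ℝ) / 2) ^ b := pow_le_pow_left₀ (by positivity) hmb b
    have hb3 : ((n:ℝ) / 2) ^ b ≤ (((n + 1 - b : ℕ)) : ℝ) ^ b :=
      pow_le_pow_left₀ (by positivity) hnb b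
    have hb4 : (((n + 1 - b : ℕ)) : ℝ) ^ b / (b.factorial : ℝ) ≤ (n.choose b : ℝ) := by
      have := Nat.pow_le_choose (α := ℝ) b n
      push_cast at this ⊢
      convert this using 2
    rw [div_le_iff₀ hfactpos] at hb4
    have : (m:ℝ) ^ b * (b.factorial : ℝ) ≤ (n.choose b : ℝ) * (b.factorial : ℝ) := by
      calc (m:ℝ) ^ b * (b.factorial : ℝ) ≤ ((m:ℝ) * b) ^ b := hb1
        _ ≤ ((n:ℝ) / 2) ^ b := hb2
        _ ≤ (((n + 1 - b : ℕ)) : ℝ) ^ b := hb3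
        _ ≤ (n.choose b : ℝ) * (b.factorial : ℝ) := hb4
    exact le_of_mul_le_mul_right this hfactpos
  have hm1exp : Real.exp (-(2*D)) * (m:ℝ) ^ (n - b) ≤ ((m:ℝ) - 1) ^ (n - b) := by
    have hupos : (0:ℝ) < 1 / (m:ℝ) := by positivity
    have hu12 : 1 / (m:ℝ) ≤ 1 / 2 := by
      rw [div_le_div_iff₀ hmR (by norm_num)]
      linarith only [hm2]
    have hu : Real.exp (-(2 * (1 / (m:ℝ)))) ≤ 1 - 1 / (m:ℝ) := by
      have e1 : 2 * (1 / (m:ℝ)) + 1 ≤ Real.exp (2 * (1 / (m:ℝ))) :=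
        Real.add_one_le_exp _
      have e2 : Real.exp (-(2 * (1 / (m:ℝ)))) * Real.exp (2 * (1 / (m:ℝ))) = 1 := by
        rw [← Real.exp_add]
        simp
      have h4 := mul_le_mul_of_nonneg_left e1
        (show (0:ℝ) ≤ 1 - 1 / (m:ℝ) by linarith only [hu12])
      nlinarith only [h4, e2, hupos, hu12, Real.exp_pos (2 * (1 / (m:ℝ)))]
    have hp1 : (Real.exp (-(2 * (1 / (m:ℝ))))) ^ (n - b) ≤ (1 - 1 / (m:ℝ)) ^ (n - b) :=
      pow_le_pow_left₀ (Real.exp_nonneg _) hu _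
    have hp2 : Real.exp (-(2*D)) ≤ (Real.exp (-(2 * (1 / (m:ℝ))))) ^ (n - b) := by
      rw [← Real.exp_nat_mul]
      rw [Real.exp_le_exp]
      have hnb_le : ((n - b : ℕ) : ℝ) ≤ (n:ℝ) := by
        have : (n - b : ℕ) ≤ n := Nat.sub_le _ _
        exact_mod_cast this
      have hnm' : 2 * D = 2 * ((n:ℝ) / m) := by rw [hnm]
      have hx : ((n - b : ℕ) : ℝ) * (2 * (1 / (m:ℝ))) ≤ 2 * ((n:ℝ) / m) := by
        rw [div_eq_mul_inv, div_eq_mul_inv] at *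
        have := mul_le_mul_of_nonneg_right hnb_le (show (0:ℝ) ≤ ((m:ℝ))⁻¹ by positivity)
        nlinarith only [this]
      rw [hnm'] at *
      linarith only [hx]
    have hp3 : ((1 - 1 / (m:ℝ)) * m) ^ (n - b) = ((m:ℝ) - 1) ^ (n - b) := by
      congr 1
      field_simp
    calc Real.exp (-(2*D)) * (m:ℝ) ^ (n - b)
        ≤ (Real.exp (-(2 * (1 / (m:ℝ))))) ^ (n - b) * (m:ℝ) ^ (n - b) :=
          mul_le_mul_of_nonneg_right hp2 (by positivity)
      _ ≤ (1 - 1 / (m:ℝ)) ^ (n - b) * (m:ℝ) ^ (n - b) :=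
          mul_le_mul_of_nonneg_right hp1 (by positivity)
      _ = ((m:ℝ) - 1) ^ (n - b) := by rw [← mul_pow, hp3]
  have hEF : (n:ℝ) ^ ((7:ℝ)/8) ≤ E := by
    have hkey : (m:ℝ) * Real.exp (-(2*D)) ≤ E := by
      rw [hEdef, hsumf, le_div_iff₀ (pow_pos hmR n)]
      have hsplit : (m:ℝ) ^ b * (m:ℝ) ^ (n - b) = (m:ℝ) ^ n := by
        rw [← pow_add]
        congr 1
        omega
      have h5 : (m:ℝ) ^ b * (Real.exp (-(2*D)) * (m:ℝ) ^ (n - b))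
          ≤ (n.choose b : ℝ) * (((m:ℝ) - 1) ^ (n - b)) :=
        mul_le_mul hCb hm1exp (by positivity) (by positivity)
      have h6 : (m:ℝ) ^ b * (Real.exp (-(2*D)) * (m:ℝ) ^ (n - b))
          = Real.exp (-(2*D)) * (m:ℝ) ^ n := by
        rw [← hsplit]; ring
      rw [h6] at h5
      calc (m:ℝ) * Real.exp (-(2*D)) * (m:ℝ) ^ n
          = (m:ℝ) * (Real.exp (-(2*D)) * (m:ℝ) ^ n) := by ring
        _ ≤ (m:ℝ) * ((n.choose b : ℝ) * (((m:ℝ) - 1) ^ (n - b))) :=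
            mul_le_mul_of_nonneg_left h5 (le_of_lt hmR)
    refine le_trans ?_ hkey
    have hmexp : (m:ℝ) * Real.exp (-(2*D)) = Real.exp (Real.log m - 2*D) := by
      rw [Real.exp_sub, Real.exp_log hmR, Real.exp_neg]
      ring
    rw [hmexp, Real.rpow_def_of_pos hnpos, ← hLdef]
    rw [Real.exp_le_exp]
    linarith only [hm15, hD16]
  -- Chernoff application
  have hfbd : ∀ y i x, |f (Function.update y i x) - f y| ≤ 2 := by
    intro y i x
    rw [hfdef]
    exact binCount_bdd' b y i x
  obtain ⟨t, htdef⟩ : ∃ t : ℝ, t = ((n:ℝ) ^ ((1:ℝ)/2))⁻¹ := ⟨_, rfl⟩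
  have htpos : 0 < t := by rw [htdef]; positivity
  have hn12ge2 : (2:ℝ) ≤ (n:ℝ) ^ ((1:ℝ)/2) := by
    rw [h12]
    nlinarith only [hn18, hn38ge2, hn38pos]
  have htc : t * 2 ≤ 1 := by
    rw [htdef, inv_mul_le_iff₀ hn12pos]
    linarith only [hn12ge2]
  have ht2 : t ^ 2 * (n:ℝ) = 1 := by
    have hsq : ((n:ℝ) ^ ((1:ℝ)/2)) ^ 2 = (n:ℝ) := by
      rw [← Real.rpow_natCast ((n:ℝ) ^ ((1:ℝ)/2)) 2, ← Real.rpow_mul (le_of_lt hnpos)]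
      norm_num
    rw [htdef, inv_pow, hsq]
    exact inv_mul_cancel₀ (ne_of_gt hnpos)
  obtain ⟨a, hadef⟩ : ∃ a : ℝ, a = E - (n:ℝ) ^ ((1:ℝ)/2) := ⟨_, rfl⟩
  have haE : (n:ℝ) ^ ((7:ℝ)/8) / 2 ≤ a := by
    rw [hadef]
    linarith only [hEF, hsqrt78]
  have hfilter_eq : (Finset.univ.filter fun y => f y ≤ (n:ℝ) ^ ((1:ℝ)/2))
      = (Finset.univ.filter fun y => f y ≤ (∑ z, f z) / (m:ℝ) ^ n - a) := by
    refine Finset.filter_congr fun y _ => ?_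
    have he : (∑ z, f z) / (m:ℝ) ^ n - a = (n:ℝ) ^ ((1:ℝ)/2) := by
      rw [← hEdef, hadef]
      ring
    rw [he]
  have hbadcard : ((Finset.univ.filter fun y => f y ≤ (n:ℝ) ^ ((1:ℝ)/2)).card : ℝ)
      ≤ (m:ℝ) ^ n * Real.exp (t ^ 2 * 2 ^ 2 * n - t * a) := by
    rw [hfilter_eq]
    exact chernoff_count' hmpos f 2 t a (by norm_num) (le_of_lt htpos) htc hfbd
  have hexp_bd : Real.exp (t ^ 2 * 2 ^ 2 * n - t * a)
      ≤ 2 * Real.exp (-(n:ℝ) ^ ((1:ℝ)/4)) := by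
    have h1 : t * ((n:ℝ) ^ ((7:ℝ)/8) / 2) ≤ t * a :=
      mul_le_mul_of_nonneg_left haE (le_of_lt htpos)
    have h2 : t * ((n:ℝ) ^ ((7:ℝ)/8) / 2) = (n:ℝ) ^ ((3:ℝ)/8) / 2 := by
      rw [htdef, h78]
      field_simp
    have h3 : t ^ 2 * 2 ^ 2 * (n:ℝ) = 4 := by
      rw [show t ^ 2 * 2 ^ 2 * (n:ℝ) = 4 * (t ^ 2 * (n:ℝ)) by ring, ht2]
      norm_num
    have h4 : Real.exp (t ^ 2 * 2 ^ 2 * n - t * a)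
        ≤ Real.exp (4 - (n:ℝ) ^ ((3:ℝ)/8) / 2) := by
      rw [Real.exp_le_exp, h3]
      linarith only [h1, h2]
    refine le_trans h4 ?_
    rw [show (2:ℝ) * Real.exp (-(n:ℝ) ^ ((1:ℝ)/4))
        = Real.exp (Real.log 2 + -(n:ℝ) ^ ((1:ℝ)/4)) by
      rw [Real.exp_add, Real.exp_log two_pos]]
    rw [Real.exp_le_exp]
    have hlog2 : (0:ℝ) ≤ Real.log 2 := Real.log_nonneg one_le_two
    linarith only [hn38, hn14, hlog2]
  have hbad2 : ((Finset.univ.filter fun y => f y ≤ (n:ℝ) ^ ((1:ℝ)/2)).card : ℝ)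
      ≤ (m:ℝ) ^ n * (2 * Real.exp (-(n:ℝ) ^ ((1:ℝ)/4))) :=
    le_trans hbadcard (mul_le_mul_of_nonneg_left hexp_bd (by positivity))
  -- from bad to good
  obtain ⟨G, hGdef⟩ : ∃ G : Finset (Fin n → Fin m),
      G = Finset.univ.filter fun y => (n:ℝ) ^ ((1:ℝ)/2) ≤ f y := ⟨_, rfl⟩
  have hcards : G.card + (Finset.univ.filter fun y => ¬ ((n:ℝ) ^ ((1:ℝ)/2) ≤ f y)).card
      = m ^ n := by
    rw [hGdef, Finset.card_filter_add_card_filter_not, Finset.card_univ]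
    simp
  have hsubbad : (Finset.univ.filter fun y => ¬ ((n:ℝ) ^ ((1:ℝ)/2) ≤ f y))
      ⊆ (Finset.univ.filter fun y => f y ≤ (n:ℝ) ^ ((1:ℝ)/2)) := by
    intro y hy
    rw [Finset.mem_filter] at hy ⊢
    exact ⟨hy.1, le_of_not_ge hy.2⟩
  have hGfrac : 1 - 2 * Real.exp (-(n:ℝ) ^ ((1:ℝ)/4)) ≤ (G.card : ℝ) * ((m:ℝ)⁻¹) ^ n := by
    have hmn_pos : (0:ℝ) < (m:ℝ) ^ n := pow_pos hmR n
    have hGa : (m:ℝ) ^ n - (m:ℝ) ^ n * (2 * Real.exp (-(n:ℝ) ^ ((1:ℝ)/4))) ≤ (G.card : ℝ) := by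
      have hc1 : ((Finset.univ.filter fun y => ¬ ((n:ℝ) ^ ((1:ℝ)/2) ≤ f y)).card : ℝ)
          ≤ (m:ℝ) ^ n * (2 * Real.exp (-(n:ℝ) ^ ((1:ℝ)/4))) := by
        refine le_trans ?_ hbad2
        exact_mod_cast Nat.cast_le.2 (Finset.card_le_card hsubbad)
      have hc2 : (G.card : ℝ)
          + ((Finset.univ.filter fun y => ¬ ((n:ℝ) ^ ((1:ℝ)/2) ≤ f y)).card : ℝ)
          = (m:ℝ) ^ n := by exact_mod_cast congrArg (Nat.cast (R := ℝ)) hcards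
      linarith only [hc1, hc2]
    rw [inv_pow, ← div_eq_mul_inv, le_div_iff₀ hmn_pos]
    nlinarith only [hGa, hmn_pos]
  -- measure computation
  have hset : {ω | (n:ℝ) ^ ((1:ℝ) / 2) ≤ (binCount b (fun i => Y i ω) : ℝ)}
      = ⋃ y ∈ G, ⋂ i, Y i ⁻¹' {y i} := by
    ext ω
    simp only [Set.mem_setOf_eq, Set.mem_iUnion, Set.mem_iInter, Set.mem_preimage,
      Set.mem_singleton_iff]
    constructor
    · intro hω
      refine ⟨fun i => Y i ω, ?_, fun i => rfl⟩
      rw [hGdef, Finset.mem_filter]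
      exact ⟨Finset.mem_univ _, by rw [hfdef]; exact hω⟩
    · rintro ⟨y, hyG, hω⟩
      have hyeq : (fun i => Y i ω) = y := funext hω
      rw [hyeq]
      rw [hGdef, Finset.mem_filter, hfdef] at hyG
      exact hyG.2
  have hmeasC : ∀ y : Fin n → Fin m, μ (⋂ i, Y i ⁻¹' {y i}) = ((m:ℝ≥0∞)⁻¹) ^ n := by
    intro y
    rw [hind.meas_iInter (fun i => ⟨{y i}, measurableSet_singleton _, rfl⟩)]
    have hone : ∀ i : Fin n, μ (Y i ⁻¹' {y i}) = (m:ℝ≥0∞)⁻¹ := by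
      intro i
      have := hunif i (y i)
      have hpre : Y i ⁻¹' {y i} = {ω | Y i ω = y i} := by
        ext ω
        simp [Set.mem_preimage]
      rw [hpre, this]
    rw [Finset.prod_congr rfl fun i _ => hone i, Finset.prod_const, Finset.card_univ,
      Fintype.card_fin]
  have hdisj : (↑G : Set (Fin n → Fin m)).PairwiseDisjoint
      (fun y => ⋂ i, Y i ⁻¹' {y i}) := by
    intro y _ y' _ hne
    refine Set.disjoint_left.2 fun ω hω hω' => hne ?_
    funext i
    have h1 := Set.mem_iInter.1 hω i
    have h2 := Set.mem_iInter.1 hω' i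
    rw [Set.mem_preimage, Set.mem_singleton_iff] at h1 h2
    rw [← h1, ← h2]
  have hmeas : ∀ y ∈ G, MeasurableSet (⋂ i, Y i ⁻¹' {y i}) :=
    fun y _ => MeasurableSet.iInter fun i => (hY i) (measurableSet_singleton _)
  rw [hset, measure_biUnion_finset hdisj hmeas]
  rw [Finset.sum_congr rfl fun y _ => hmeasC y, Finset.sum_const, nsmul_eq_mul]
  -- final ENNReal manipulation
  have hεnn : (0:ℝ) ≤ 2 * Real.exp (-(n:ℝ) ^ ((1:ℝ)/4)) := by positivity
  have hrhs : (G.card : ℝ≥0∞) * ((m:ℝ≥0∞)⁻¹) ^ n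
      = ENNReal.ofReal ((G.card : ℝ) * ((m:ℝ)⁻¹) ^ n) := by
    rw [ENNReal.ofReal_mul (by positivity), ENNReal.ofReal_pow (by positivity),
      ENNReal.ofReal_inv_of_pos hmR, ENNReal.ofReal_natCast, ENNReal.ofReal_natCast]
  rw [hrhs]
  rcases le_or_gt 1 (2 * Real.exp (-(n:ℝ) ^ ((1:ℝ)/4))) with hε1 | hε1
  · have : (1:ℝ≥0∞) ≤ ENNReal.ofReal (2 * Real.exp (-(n:ℝ) ^ ((1:ℝ)/4))) := by
      rw [← ENNReal.ofReal_one]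
      exact ENNReal.ofReal_le_ofReal hε1
    rw [tsub_eq_zero_of_le this]
    exact zero_le
  · calc (1:ℝ≥0∞) - ENNReal.ofReal (2 * Real.exp (-(n:ℝ) ^ ((1:ℝ)/4)))
        ≤ ENNReal.ofReal (1 - 2 * Real.exp (-(n:ℝ) ^ ((1:ℝ)/4))) := by
          rw [tsub_le_iff_right, ← ENNReal.ofReal_add (by linarith only [hε1]) hεnn]
          rw [sub_add_cancel, ENNReal.ofReal_one]
      _ ≤ ENNReal.ofReal ((G.card : ℝ) * ((m:ℝ)⁻¹) ^ n) :=
          ENNReal.ofReal_le_ofReal hGfrac
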